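/- arXiv:math/0411346 — 5 statements merged into one kernel-verified Lean document; each statement's English description precedes it below -/
import Mathlib

section
/- Let R be a commutative ring, A and E modules over R, A₀ ⊆ A a submodule, and cl : A₀ → E an R-linear map. Let T₁, T₂ : A → A be R-linear endomorphisms with T₁∘T₂ = T₂∘T₁ and Tᵢ(A₀) ⊆ A₀ for i = 1,2, and let a₁, a₂ ∈ R satisfy cl(Tᵢ x) = aᵢ • cl(x) for all x ∈ A₀. Let Q₁, Q₂ ∈ R[Z] be polynomials such that Qᵢ(Tᵢ)(v) ∈ A₀ for every v ∈ A. Then for every v ∈ A one has Q₁(a₁) • cl(Q₂(T₂)(v)) = Q₂(a₂) • cl(Q₁(T₁)(v)); in particular the elements cl(Q₁(T₁)(v)) and cl(Q₂(T₂)(v)) of E are proportional. -/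
/-! Both sides equal `cl` of `Q₁(T₁) Q₂(T₂) v = Q₂(T₂) Q₁(T₁) v`, an element of `A₀`: applying
`Q₁(T₁)` to `Q₂(T₂) v ∈ A₀` multiplies its class by `Q₁(a₁)`, because `cl` intertwines `T₁|A₀`
with multiplication by `a₁`, and symmetrically for the other factor. -/

open Polynomial

namespace LinearMap

variable {R M N : Type*} [CommSemiring R] [AddCommMonoid M] [Module R M]
  [AddCommMonoid N] [Module R N]

theorem aeval_comp_eq_comp_aeval {f : M →ₗ[R] N} {S : Module.End R M} {U : Module.End R N}
    (h : U ∘ₗ f = f ∘ₗ S) (Q : R[X]) : aeval U Q ∘ₗ f = f ∘ₗ aeval S Q := by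
  induction Q using Polynomial.induction_on' with
  | add p q hp hq => rw [map_add, map_add, add_comp, comp_add, hp, hq]
  | monomial n c =>
    simp only [aeval_monomial, Module.algebraMap_end_eq_smul_id, smul_mul_assoc, one_mul,
      smul_comp, comp_smul, ← Module.End.one_eq_id, Module.End.commute_pow_left_of_commute h]

theorem comp_aeval_eq_eval_smul {f : M →ₗ[R] N} {S : Module.End R M} {a : R}
    (h : f ∘ₗ S = a • f) (Q : R[X]) : f ∘ₗ aeval S Q = Q.eval a • f := by
  have hU : algebraMap R (Module.End R N) a ∘ₗ f = f ∘ₗ S := by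
    rw [h, Module.algebraMap_end_eq_smul_id, smul_comp, id_comp]
  rw [← aeval_comp_eq_comp_aeval hU, aeval_algebraMap_apply_eq_algebraMap_eval,
    Module.algebraMap_end_eq_smul_id, smul_comp, id_comp]

theorem coe_aeval_restrict_apply {p : Submodule R M} {S : Module.End R M}
    (hS : ∀ x ∈ p, S x ∈ p) (Q : R[X]) (x : p) :
    (aeval (S.restrict hS) Q x : M) = aeval S Q x :=
  congr($(aeval_comp_eq_comp_aeval (f := p.subtype) (U := S) (S := S.restrict hS) rfl Q) x).symm

end LinearMap

theorem Commute.aeval_aeval {R S : Type*} [CommSemiring R] [Semiring S] [Algebra R S] {x y : S}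
    (h : Commute x y) (p q : R[X]) : Commute (aeval x p) (aeval y q) :=
  Algebra.commute_of_mem_adjoin_singleton_of_commute (aeval_mem_adjoin_singleton R y)
    (Algebra.commute_of_mem_adjoin_singleton_of_commute (aeval_mem_adjoin_singleton R x)
      h.symm).symm

/-- **Proposition 3.1** (algebraic content).  Let `A₀ ⊆ A` be a submodule,
`cl : A₀ →ₗ[R] E`, and `T₁, T₂` commuting endomorphisms of `A` preserving `A₀`
and acting on the image of `cl` by the scalars `a₁, a₂`.  If `Q₁, Q₂` are
polynomials with `Qᵢ(Tᵢ)(A) ⊆ A₀`, then for every `v ∈ A` the elements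
`cl (Q₁(T₁) v)` and `cl (Q₂(T₂) v)` of `E` are proportional:
`Q₁(a₁) • cl (Q₂(T₂) v) = Q₂(a₂) • cl (Q₁(T₁) v)`. -/
theorem prop_3_1 {R A E : Type*} [CommRing R] [AddCommGroup A] [Module R A]
    [AddCommGroup E] [Module R E]
    (A₀ : Submodule R A) (cl : A₀ →ₗ[R] E)
    (T₁ T₂ : A →ₗ[R] A) (hcomm : T₁ ∘ₗ T₂ = T₂ ∘ₗ T₁)
    (hT₁ : ∀ x ∈ A₀, T₁ x ∈ A₀) (hT₂ : ∀ x ∈ A₀, T₂ x ∈ A₀)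
    (a₁ a₂ : R)
    (ha₁ : ∀ x : A₀, cl ⟨T₁ x, hT₁ x x.2⟩ = a₁ • cl x)
    (ha₂ : ∀ x : A₀, cl ⟨T₂ x, hT₂ x x.2⟩ = a₂ • cl x)
    (Q₁ Q₂ : Polynomial R)
    (hQ₁ : ∀ v : A, Polynomial.aeval T₁ Q₁ v ∈ A₀)
    (hQ₂ : ∀ v : A, Polynomial.aeval T₂ Q₂ v ∈ A₀) :
    ∀ v : A,
      Polynomial.eval a₁ Q₁ • cl ⟨Polynomial.aeval T₂ Q₂ v, hQ₂ v⟩ =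
        Polynomial.eval a₂ Q₂ • cl ⟨Polynomial.aeval T₁ Q₁ v, hQ₁ v⟩ := by
  intro v
  have hcl₁ : cl ∘ₗ T₁.restrict hT₁ = a₁ • cl := LinearMap.ext ha₁
  have hcl₂ : cl ∘ₗ T₂.restrict hT₂ = a₂ • cl := LinearMap.ext ha₂
  have hQ : Commute (aeval T₁ Q₁) (aeval T₂ Q₂) := Commute.aeval_aeval hcomm Q₁ Q₂
  have hswap : aeval (T₁.restrict hT₁) Q₁ ⟨aeval T₂ Q₂ v, hQ₂ v⟩ =
      aeval (T₂.restrict hT₂) Q₂ ⟨aeval T₁ Q₁ v, hQ₁ v⟩ := by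
    ext
    simpa only [LinearMap.coe_aeval_restrict_apply, Module.End.mul_apply] using congr($hQ.eq v)
  calc eval a₁ Q₁ • cl ⟨aeval T₂ Q₂ v, hQ₂ v⟩
      = cl (aeval (T₁.restrict hT₁) Q₁ ⟨aeval T₂ Q₂ v, hQ₂ v⟩) :=
        congr($(LinearMap.comp_aeval_eq_eval_smul hcl₁ Q₁) _).symm
    _ = cl (aeval (T₂.restrict hT₂) Q₂ ⟨aeval T₁ Q₁ v, hQ₁ v⟩) := by rw [hswap]
    _ = eval a₂ Q₂ • cl ⟨aeval T₁ Q₁ v, hQ₁ v⟩ :=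
        congr($(LinearMap.comp_aeval_eq_eval_smul hcl₂ Q₂) _)
end

section
/- Let l be a prime, n ≥ 1, M = l^n, and d ≥ 1. Let J be the standard symplectic 2d×2d matrix (block form [[0, I_d], [−I_d, 0]]) over ℤ/Mℤ, and let Sp_{2d}(ℤ/Mℤ) = { S ∈ GL_{2d}(ℤ/Mℤ) : Sᵀ J S = J }. Let H be an additive subgroup of (ℤ/Mℤ)^{2d} such that S·x ∈ H for every S ∈ Sp_{2d}(ℤ/Mℤ) and every x ∈ H (matrix–vector multiplication). Then there exists k with 0 ≤ k ≤ n such that H = l^k · (ℤ/Mℤ)^{2d}, the subgroup of all elements divisible by l^k. -/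
/-!
Over a local ring `R` the symplectic group acts transitively on primitive vectors (vectors with
a unit coordinate): if `ω(u, w)` is a unit, the symplectic transvection `x ↦ x + c ω(x, v) v`
with `v = w - u` and `c = ω(u, w)⁻¹` sends `u` to `w`, and for arbitrary primitive `u`, `w` one
finds an intermediate `z` with `ω(u, z)` and `ω(z, w)` both units. Hence a stable subgroup `H`
containing `r • u` for one primitive `u` contains `r • w` for all primitive `w`.

When the maximal ideal is generated by a nilpotent `π`, every vector is `π ^ m • p` with `p`
primitive. If `k` is least with `π ^ k • e ∈ H` for a basis vector `e`, transitivity gives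
`H ⊆ π ^ k • R^{2d}`. Conversely `π ^ k • y ∈ H`: either `y` is primitive, or `y + e` is and
`π ^ k • y = π ^ k • (y + e) - π ^ k • e`.
-/

/-- The standard symplectic `2d × 2d` matrix `[[0, I], [-I, 0]]` over a ring:
entry `(i, j)` is `1` if `j = i + d`, `-1` if `i = j + d`, and `0` otherwise. -/
def stdSympMatrix (R : Type*) [Ring R] (d : ℕ) : Matrix (Fin (2 * d)) (Fin (2 * d)) R :=
  Matrix.of fun i j =>
    if i.val + d = j.val then 1 else if j.val + d = i.val then -1 else 0

open Matrix IsLocalRing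

lemma IsLocalRing.isUnit_add_of_not_isUnit {R : Type*} [CommRing R] [IsLocalRing R] {a b : R}
    (ha : IsUnit a) (hb : ¬IsUnit b) : IsUnit (a + b) := by
  by_contra hab
  have := (maximalIdeal R).sub_mem ((mem_maximalIdeal _).2 hab) ((mem_maximalIdeal _).2 hb)
  rw [add_sub_cancel_right, mem_maximalIdeal] at this
  exact this ha

lemma LinearMap.IsAlt.apply_transvection_flip {R M : Type*} [CommRing R] [AddCommGroup M]
    [Module R M] {B : M →ₗ[R] M →ₗ[R] R} (hB : B.IsAlt) (c : R) (v x y : M) :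
    B (transvection (c • B.flip v) v x) (transvection (c • B.flip v) v y) = B x y := by
  have hvy := hB.neg y v
  simp only [transvection.apply, map_add, map_smul, LinearMap.add_apply, LinearMap.smul_apply,
    LinearMap.flip_apply, smul_eq_mul, hB.self_eq_zero v, ← hvy]
  ring

section Bilin

variable {ι R : Type*} [Fintype ι] [DecidableEq ι] [CommRing R]

lemma Matrix.isAlt_toBilin'_sub_transpose (A : Matrix ι ι R) : (A - Aᵀ).toBilin'.IsAlt :=
  fun x => by
    rw [toBilin'_apply', sub_mulVec, dotProduct_sub, dotProduct_mulVec, mulVec_transpose,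
      dotProduct_comm x, sub_self]

lemma Matrix.transpose_toMatrix'_mul_mul_toMatrix' {J : Matrix ι ι R}
    (f : (ι → R) →ₗ[R] ι → R) (hf : ∀ x y, J.toBilin' (f x) (f y) = J.toBilin' x y) :
    (LinearMap.toMatrix' f)ᵀ * J * LinearMap.toMatrix' f = J := by
  apply toBilin'.injective
  rw [← toBilin'_comp, toLin'_toMatrix']
  exact LinearMap.BilinForm.ext hf

lemma Matrix.exists_isUnit_transpose_mul_mul_mulVec_eq {J : Matrix ι ι R}
    (hJ : J.toBilin'.IsAlt) {u w : ι → R} (h : IsUnit (J.toBilin' u w)) :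
    ∃ S : Matrix ι ι R, IsUnit S ∧ Sᵀ * J * S = J ∧ S *ᵥ u = w := by
  let τ := LinearEquiv.transvection
    (f := ((h.unit⁻¹ : Rˣ) : R) • LinearMap.flip J.toBilin' (w - u)) (v := w - u)
    (by simp only [LinearMap.smul_apply, LinearMap.flip_apply, hJ.self_eq_zero, smul_zero])
  refine ⟨LinearMap.toMatrix' τ.toLinearMap, ?_, ?_, ?_⟩
  · exact LinearMap.isUnit_toMatrix'_iff.mpr ((Module.End.isUnit_iff _).mpr τ.bijective)
  · exact transpose_toMatrix'_mul_mul_toMatrix' _ (hJ.apply_transvection_flip _ _)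
  · rw [LinearMap.toMatrix'_mulVec]
    simp [τ, LinearMap.transvection.apply, hJ.self_eq_zero, h.val_inv_mul]

end Bilin

def IsPrimitiveVec {ι R : Type*} [Monoid R] (v : ι → R) : Prop := ∃ i, IsUnit (v i)

section PrimitiveVec

variable {ι R : Type*} [CommRing R] [IsLocalRing R]

lemma isPrimitiveVec_or_add_single_one [DecidableEq ι] (y : ι → R) (i : ι) :
    IsPrimitiveVec y ∨ IsPrimitiveVec (y + Pi.single i 1) := by
  by_cases hy : IsUnit (y i)
  · exact .inl ⟨i, hy⟩
  · refine .inr ⟨i, ?_⟩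
    rw [Pi.add_apply, Pi.single_eq_same, add_comm]
    exact isUnit_add_of_not_isUnit isUnit_one hy

variable {π : R}

lemma exists_eq_smul_of_not_isPrimitiveVec (hπ : maximalIdeal R = Ideal.span {π})
    {x : ι → R} (hx : ¬IsPrimitiveVec x) : ∃ y, x = π • y := by
  have h : ∀ i, π ∣ x i := fun i => by
    rw [← Ideal.mem_span_singleton, ← hπ, mem_maximalIdeal, mem_nonunits_iff]
    exact fun hi => hx ⟨i, hi⟩
  choose y hy using h
  exact ⟨y, funext hy⟩

lemma exists_eq_pow_smul_isPrimitiveVec [Nonempty ι]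
    (hπ : maximalIdeal R = Ideal.span {π}) {n : ℕ} (hπn : π ^ n = 0) (x : ι → R) :
    ∃ m ≤ n, ∃ p, IsPrimitiveVec p ∧ x = π ^ m • p := by
  classical
  let P m := ∃ y : ι → R, x = π ^ m • y
  obtain ⟨y, hy⟩ : P (Nat.findGreatest P n) :=
    Nat.findGreatest_spec (Nat.zero_le n) ⟨x, by simp⟩
  have hle := Nat.findGreatest_le (P := P) n
  refine ⟨_, hle, ?_⟩
  by_cases hy' : IsPrimitiveVec y
  · exact ⟨y, hy', hy⟩
  obtain ⟨z, rfl⟩ := exists_eq_smul_of_not_isPrimitiveVec hπ hy'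
  have hn : Nat.findGreatest P n = n := by
    by_contra hne
    exact Nat.findGreatest_is_greatest (P := P) (n := n) (lt_add_one _) (by omega)
      ⟨z, by rw [hy, smul_smul, ← pow_succ]⟩
  obtain ⟨i⟩ := ‹Nonempty ι›
  refine ⟨Pi.single i 1, ⟨i, by simp⟩, ?_⟩
  rw [hy, hn, hπn, zero_smul, zero_smul]

end PrimitiveVec

section stdSympMatrix

variable {R : Type*} [CommRing R] {d : ℕ}

lemma stdSympMatrix_eq_sub_transpose (hd : 0 < d) :
    stdSympMatrix R d = (of fun i j : Fin (2 * d) => if i.val + d = j.val then 1 else 0) -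
      (of fun i j : Fin (2 * d) => if i.val + d = j.val then 1 else 0)ᵀ := by
  ext i j
  simp only [stdSympMatrix, Matrix.sub_apply, transpose_apply, of_apply]
  split_ifs <;> first | omega | ring

lemma isAlt_toBilin'_stdSympMatrix (hd : 0 < d) : (stdSympMatrix R d).toBilin'.IsAlt := by
  rw [stdSympMatrix_eq_sub_transpose hd]
  exact isAlt_toBilin'_sub_transpose _

lemma exists_stdSympMatrix_mulVec_single (j : Fin (2 * d)) :
    ∃ i, ∃ s : R, IsUnit s ∧ stdSympMatrix R d *ᵥ Pi.single i 1 = s • Pi.single j 1 := by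
  have hj := j.isLt
  rcases lt_or_ge j.val d with hjd | hjd
  · refine ⟨⟨j + d, by omega⟩, 1, isUnit_one, ?_⟩
    ext k
    simp only [mulVec_single_one, col_apply, stdSympMatrix, of_apply, Pi.smul_apply,
      Pi.single_apply, Fin.ext_iff]
    split_ifs <;> first | omega | simp
  · refine ⟨⟨j - d, by omega⟩, -1, isUnit_one.neg, ?_⟩
    ext k
    simp only [mulVec_single_one, col_apply, stdSympMatrix, of_apply, Pi.smul_apply,
      Pi.single_apply, Fin.ext_iff]
    split_ifs <;> first | omega | simp

lemma IsPrimitiveVec.exists_isUnit_toBilin'_stdSympMatrix_single {u : Fin (2 * d) → R}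
    (hu : IsPrimitiveVec u) : ∃ i, IsUnit ((stdSympMatrix R d).toBilin' u (Pi.single i 1)) := by
  obtain ⟨j, hj⟩ := hu
  obtain ⟨i, s, hs, hcol⟩ := exists_stdSympMatrix_mulVec_single (R := R) j
  refine ⟨i, ?_⟩
  rw [toBilin'_apply', hcol, dotProduct_smul, dotProduct_single, mul_one, smul_eq_mul]
  exact hs.mul hj

variable [IsLocalRing R]

lemma exists_isUnit_toBilin'_stdSympMatrix_left_right {u w : Fin (2 * d) → R}
    (hu : IsPrimitiveVec u) (hw : IsPrimitiveVec w) : ∃ z,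
      IsUnit ((stdSympMatrix R d).toBilin' u z) ∧ IsUnit ((stdSympMatrix R d).toBilin' z w) := by
  have hd : 0 < d := by obtain ⟨i, -⟩ := hu; have := i.isLt; omega
  set B := (stdSympMatrix R d).toBilin'
  obtain ⟨i, hi⟩ := hu.exists_isUnit_toBilin'_stdSympMatrix_single
  obtain ⟨j, hj⟩ := hw.exists_isUnit_toBilin'_stdSympMatrix_single
  replace hj : IsUnit (B (Pi.single j 1) w) := by
    rw [← (isAlt_toBilin'_stdSympMatrix hd).neg_eq w]
    exact hj.neg
  by_cases hiw : IsUnit (B (Pi.single i 1) w)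
  · exact ⟨_, hi, hiw⟩
  by_cases huj : IsUnit (B u (Pi.single j 1))
  · exact ⟨_, huj, hj⟩
  refine ⟨Pi.single i 1 + Pi.single j 1, ?_, ?_⟩
  · rw [map_add]
    exact isUnit_add_of_not_isUnit hi huj
  · rw [map_add, LinearMap.add_apply, add_comm]
    exact isUnit_add_of_not_isUnit hj hiw

theorem exists_isUnit_symplectic_mulVec_eq {u w : Fin (2 * d) → R}
    (hu : IsPrimitiveVec u) (hw : IsPrimitiveVec w) :
    ∃ S : Matrix (Fin (2 * d)) (Fin (2 * d)) R, IsUnit S ∧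
      Sᵀ * stdSympMatrix R d * S = stdSympMatrix R d ∧ S *ᵥ u = w := by
  have hd : 0 < d := by obtain ⟨i, -⟩ := hu; have := i.isLt; omega
  have hJ := isAlt_toBilin'_stdSympMatrix (R := R) hd
  obtain ⟨z, huz, hzw⟩ := exists_isUnit_toBilin'_stdSympMatrix_left_right hu hw
  obtain ⟨S₁, hS₁, hS₁J, rfl⟩ := exists_isUnit_transpose_mul_mul_mulVec_eq hJ huz
  obtain ⟨S₂, hS₂, hS₂J, rfl⟩ := exists_isUnit_transpose_mul_mul_mulVec_eq hJ hzw
  refine ⟨S₂ * S₁, hS₂.mul hS₁, ?_, (mulVec_mulVec _ _ _).symm⟩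
  calc (S₂ * S₁)ᵀ * stdSympMatrix R d * (S₂ * S₁)
      = S₁ᵀ * (S₂ᵀ * stdSympMatrix R d * S₂) * S₁ := by
        simp only [transpose_mul, Matrix.mul_assoc]
    _ = stdSympMatrix R d := by rw [hS₂J, hS₁J]

theorem exists_coe_eq_pow_smul_of_symplectic_stable {π : R} {n : ℕ} (hd : 0 < d)
    (hπ : maximalIdeal R = Ideal.span {π}) (hπn : π ^ n = 0)
    (H : AddSubgroup (Fin (2 * d) → R))
    (hH : ∀ S : Matrix (Fin (2 * d)) (Fin (2 * d)) R, IsUnit S →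
      Sᵀ * stdSympMatrix R d * S = stdSympMatrix R d → ∀ x ∈ H, S *ᵥ x ∈ H) :
    ∃ k ≤ n, (H : Set (Fin (2 * d) → R)) = {x | ∃ y, x = π ^ k • y} := by
  classical
  have move {u w} (hu : IsPrimitiveVec u) (hw : IsPrimitiveVec w) (r : R) (hr : r • u ∈ H) :
      r • w ∈ H := by
    obtain ⟨S, hS, hSJ, rfl⟩ := exists_isUnit_symplectic_mulVec_eq hu hw
    simpa [mulVec_smul] using hH S hS hSJ _ hr
  let i₀ : Fin (2 * d) := ⟨0, by omega⟩
  have : Nonempty (Fin (2 * d)) := ⟨i₀⟩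
  let e : Fin (2 * d) → R := Pi.single i₀ 1
  have he : IsPrimitiveVec e := ⟨i₀, by simp [e]⟩
  have hk : ∃ k, π ^ k • e ∈ H := ⟨n, by simp [hπn]⟩
  refine ⟨Nat.find hk, Nat.find_min' hk (by simp [hπn]),
    Set.ext fun x => ⟨fun hx => ?_, ?_⟩⟩
  · obtain ⟨m, -, p, hp, rfl⟩ := exists_eq_pow_smul_isPrimitiveVec hπ hπn x
    have hkm : Nat.find hk ≤ m := Nat.find_min' hk (move hp he _ hx)
    exact ⟨π ^ (m - Nat.find hk) • p,
      by rw [smul_smul, ← pow_add, Nat.add_sub_cancel' hkm]⟩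
  · rintro ⟨y, rfl⟩
    have hke := Nat.find_spec hk
    rcases isPrimitiveVec_or_add_single_one y i₀ with hy | (hye : IsPrimitiveVec (y + e))
    · exact move he hy _ hke
    · have := sub_mem (move he hye _ hke) hke
      rwa [smul_add, add_sub_cancel_right] at this

end stdSympMatrix

namespace ZMod

variable {p n : ℕ} [Fact p.Prime]

lemma natCast_dvd_of_not_isUnit {r : ZMod (p ^ n)} (hr : ¬IsUnit r) :
    (p : ZMod (p ^ n)) ∣ r := by
  have hp := Fact.out (p := p.Prime)
  have : NeZero (p ^ n) := ⟨pow_ne_zero _ hp.ne_zero⟩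
  rw [← natCast_zmod_val r, isUnit_iff_coprime] at hr
  obtain ⟨c, hc⟩ : p ∣ r.val := by
    by_contra h
    exact hr (((hp.coprime_iff_not_dvd.mpr h).symm).pow_right n)
  exact ⟨c, by rw [← natCast_zmod_val r, hc, Nat.cast_mul]⟩

lemma not_isUnit_natCast_prime [NeZero n] : ¬IsUnit (p : ZMod (p ^ n)) := by
  rw [isUnit_iff_coprime, Nat.coprime_pow_right_iff (Nat.pos_of_neZero n), Nat.coprime_self]
  exact (Fact.out (p := p.Prime)).ne_one

instance [NeZero n] : IsLocalRing (ZMod (p ^ n)) :=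
  have : Fact (1 < p ^ n) := ⟨Nat.one_lt_pow (NeZero.ne n) (Fact.out (p := p.Prime)).one_lt⟩
  .of_nonunits_add fun _ _ ha hb hab => not_isUnit_natCast_prime <|
    isUnit_of_dvd_unit ((natCast_dvd_of_not_isUnit ha).add (natCast_dvd_of_not_isUnit hb)) hab

lemma maximalIdeal_eq_span_natCast [NeZero n] :
    maximalIdeal (ZMod (p ^ n)) = Ideal.span {(p : ZMod (p ^ n))} :=
  le_antisymm (fun _ hr => Ideal.mem_span_singleton.mpr (natCast_dvd_of_not_isUnit hr))
    ((Ideal.span_singleton_le_iff_mem _).mpr not_isUnit_natCast_prime)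

end ZMod

/-- **Key step in Lemma 2.24.**  Let `l` be a prime, `M = lⁿ`, `d ≥ 1`, and let
`J` be the standard symplectic matrix over `ℤ/M`.  If an additive subgroup `H`
of `(ℤ/M)^{2d}` is stable under the symplectic group
`Sp_{2d}(ℤ/M) = {S ∈ GL : Sᵀ J S = J}` (acting by matrix-vector
multiplication), then `H = l^k · (ℤ/M)^{2d}` for some `0 ≤ k ≤ n`. -/
theorem lemma_2_24_key (l n d : ℕ) (hl : l.Prime) (hn : 1 ≤ n) (hd : 1 ≤ d)
    (H : AddSubgroup (Fin (2 * d) → ZMod (l ^ n)))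
    (hstab : ∀ S : Matrix (Fin (2 * d)) (Fin (2 * d)) (ZMod (l ^ n)),
      IsUnit S →
      S.transpose * stdSympMatrix (ZMod (l ^ n)) d * S = stdSympMatrix (ZMod (l ^ n)) d →
      ∀ x ∈ H, S.mulVec x ∈ H) :
    ∃ k : ℕ, k ≤ n ∧
      (H : Set (Fin (2 * d) → ZMod (l ^ n))) =
        {x | ∃ y : Fin (2 * d) → ZMod (l ^ n), x = ((l : ZMod (l ^ n)) ^ k) • y} := by
  have : Fact l.Prime := ⟨hl⟩
  have : NeZero n := ⟨by omega⟩
  exact exists_coe_eq_pow_smul_of_symplectic_stable hd ZMod.maximalIdeal_eq_span_natCast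
    (by rw [← Nat.cast_pow, ZMod.natCast_self]) H hstab
end

section
/- Let p be a prime, 𝔽 a field with p² elements, and σ : 𝔽 → 𝔽 the Frobenius automorphism x ↦ x^p. Let V be a 3-dimensional 𝔽-vector space, regarded also as a 6-dimensional 𝔽_p-vector space, equipped with an 𝔽_p-bilinear form E : V × V → 𝔽_p that is alternating, nondegenerate, and satisfies E(c·x, y) = E(x, σ(c)·y) for all c ∈ 𝔽 and x, y ∈ V. Fix v ∈ V, v ≠ 0, with E(v, c·v) = 0 for all c ∈ 𝔽, and set D₂ = 𝔽·v and D₂^⊥ = {x ∈ V : E(x,d) = 0 for all d ∈ D₂}. If W ⊆ V is a Lagrangian (a 3-dimensional 𝔽_p-subspace with E vanishing identically on W × W) and D₂ ⊆ W, then W ⊆ D₂^⊥, the 𝔽-subspace 𝔽·W generated by W equals D₂^⊥, and dim_𝔽(𝔽·W) = 2. -/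
/-!
Every `x ∈ W` is orthogonal to `D₂ ⊆ W`, so `W ⊆ D₂^⊥`. The relation `E(c·x, y) = E(x, σ(c)·y)`
makes `D₂^⊥` an `𝔽`-subspace, and nondegeneracy gives it `𝔽_p`-dimension `6 - 2 = 4`, i.e.
`𝔽`-dimension `2`. Hence `𝔽·W ⊆ D₂^⊥` has `𝔽`-dimension at most `2`, and at least `2` because
its `𝔽_p`-dimension is even and `≥ dim W = 3`.
-/

open Module

section Tower

variable {K L V : Type*} [Field K] [Field L] [Algebra K L]
  [AddCommGroup V] [Module K V] [Module L V] [IsScalarTower K L V]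

theorem Submodule.finrank_restrictScalars_eq_mul (S : Submodule L V) :
    finrank K (S.restrictScalars K) = finrank K L * finrank L S := by
  rw [← finrank_mul_finrank K L (S.restrictScalars K),
    (Submodule.restrictScalarsEquiv K L V S).finrank_eq]

def leftOrthogonalOfAdjoint (E : V →ₗ[K] V →ₗ[K] K) (τ : L → L)
    (hadj : ∀ (c : L) (x y : V), E (c • x) y = E x (τ c • y)) (D : Submodule L V) :
    Submodule L V where
  carrier := {x | ∀ d ∈ D, E x d = 0}
  add_mem' hx hy d hd := by rw [map_add, LinearMap.add_apply, hx d hd, hy d hd, add_zero]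
  zero_mem' d _ := by rw [map_zero, LinearMap.zero_apply]
  smul_mem' c x hx d hd := by rw [hadj]; exact hx _ (D.smul_mem _ hd)

theorem finrank_leftOrthogonalOfAdjoint [FiniteDimensional K V] {E : V →ₗ[K] V →ₗ[K] K}
    (hE : E.Nondegenerate) (τ : L → L) (hadj : ∀ (c : L) (x y : V), E (c • x) y = E x (τ c • y))
    (D : Submodule L V) :
    finrank K ((leftOrthogonalOfAdjoint E τ hadj D).restrictScalars K) =
      finrank K V - finrank K (D.restrictScalars K) :=
  LinearMap.BilinForm.finrank_orthogonal (B := E.flip)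
    (LinearMap.flip_nondegenerate.mpr hE) (D.restrictScalars K)

theorem Submodule.span_eq_of_finrank_lt [FiniteDimensional K L] [FiniteDimensional L V]
    (W : Submodule K V) (P : Submodule L V) (hWP : W ≤ P.restrictScalars K)
    (hdim : finrank K (P.restrictScalars K) < finrank K W + finrank K L) :
    Submodule.span L (W : Set V) = P := by
  have : FiniteDimensional K V := .trans K L V
  set S := Submodule.span L (W : Set V)
  have hSP : S ≤ P := Submodule.span_le.mpr hWP
  have hWS : finrank K W ≤ finrank K (S.restrictScalars K) :=
    Submodule.finrank_mono (Submodule.subset_span (R := L) (s := (W : Set V)))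
  rw [finrank_restrictScalars_eq_mul] at hWS hdim
  have hdeg : 0 < finrank K L := finrank_pos
  have : finrank L P < finrank L S + 1 := by
    rw [← Nat.mul_lt_mul_left hdeg, mul_add_one]; omega
  exact Submodule.eq_of_le_of_finrank_le hSP (by omega)

end Tower

theorem lemma_4_3_12_part1_general (p : ℕ) (hp : p.Prime)
    (𝔽 : Type*) [Field 𝔽] [Fintype 𝔽] (hcard : Fintype.card 𝔽 = p ^ 2)
    (V : Type*) [AddCommGroup V] [Module 𝔽 V]
    [Module (ZMod p) V] [Algebra (ZMod p) 𝔽] [IsScalarTower (ZMod p) 𝔽 V]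
    (hV : Module.finrank 𝔽 V = 3)
    (E : V →ₗ[ZMod p] V →ₗ[ZMod p] ZMod p)
    (halt : ∀ x : V, E x x = 0)
    (hnd : ∀ x : V, (∀ y : V, E x y = 0) → x = 0)
    (hadj : ∀ (c : 𝔽) (x y : V), E (c • x) y = E x ((c ^ p) • y))
    (v : V) (hv0 : v ≠ 0)
    (W : Submodule (ZMod p) V)
    (hW3 : Module.finrank (ZMod p) W = 3)
    (hWiso : ∀ x ∈ W, ∀ y ∈ W, E x y = 0)
    (hD₂W : ((Submodule.span 𝔽 {v} : Submodule 𝔽 V) : Set V) ⊆ (W : Set V)) :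
    (W : Set V) ⊆ {x : V | ∀ d ∈ (Submodule.span 𝔽 {v} : Submodule 𝔽 V), E x d = 0} ∧
    ((Submodule.span 𝔽 (W : Set V) : Submodule 𝔽 V) : Set V) =
      {x : V | ∀ d ∈ (Submodule.span 𝔽 {v} : Submodule 𝔽 V), E x d = 0} ∧
    Module.finrank 𝔽 ↥(Submodule.span 𝔽 (W : Set V)) = 2 := by
  have : Fact p.Prime := ⟨hp⟩
  have : FiniteDimensional 𝔽 V := .of_finrank_eq_succ hV
  have : FiniteDimensional (ZMod p) V := .trans (ZMod p) 𝔽 V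
  have hF : finrank (ZMod p) 𝔽 = 2 :=
    Nat.pow_right_injective hp.two_le ((FiniteField.pow_finrank_eq_card p 𝔽).trans hcard)
  have hE : E.Nondegenerate :=
    (LinearMap.IsAlt.isRefl halt).nondegenerate_iff_separatingLeft.mpr hnd
  set D₂ := Submodule.span 𝔽 {v}
  set P := leftOrthogonalOfAdjoint E (· ^ p) hadj D₂
  have hWP : W ≤ P.restrictScalars (ZMod p) := fun x hx d hd => hWiso x hx d (hD₂W hd)
  have hP : finrank (ZMod p) (P.restrictScalars (ZMod p)) = 4 := by
    rw [finrank_leftOrthogonalOfAdjoint hE, Submodule.finrank_restrictScalars_eq_mul,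
      finrank_span_singleton hv0, ← finrank_mul_finrank (ZMod p) 𝔽 V, hF, hV]
  have hspan : Submodule.span 𝔽 (W : Set V) = P :=
    Submodule.span_eq_of_finrank_lt W P hWP (by omega)
  refine ⟨hWP, congrArg SetLike.coe hspan, ?_⟩
  rw [Submodule.finrank_restrictScalars_eq_mul, hF] at hP
  rw [hspan]; omega

/-- **Part of Lemma 4.3.12.**  Let `𝔽` be a field with `p²` elements, `V` a
3-dimensional `𝔽`-vector space (hence a 6-dimensional `𝔽_p`-space), and
`E : V × V → 𝔽_p` an alternating nondegenerate `𝔽_p`-bilinear form with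
`E(c·x, y) = E(x, σ(c)·y)` where `σ(c) = c^p` is the Frobenius.  Let `v ≠ 0`
with `E(v, c·v) = 0` for all `c ∈ 𝔽`, and `D₂ = 𝔽·v`.  If `W` is a Lagrangian
(3-dimensional `𝔽_p`-subspace on which `E` vanishes) containing `D₂`, then
`W ⊆ D₂^⊥`, the `𝔽`-span of `W` equals `D₂^⊥`, and `dim_𝔽 (𝔽·W) = 2`. -/
theorem lemma_4_3_12_part1 (p : ℕ) (hp : p.Prime)
    (𝔽 : Type*) [Field 𝔽] [Fintype 𝔽] (hcard : Fintype.card 𝔽 = p ^ 2)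
    (V : Type*) [AddCommGroup V] [Module 𝔽 V]
    [Module (ZMod p) V] [Algebra (ZMod p) 𝔽] [IsScalarTower (ZMod p) 𝔽 V]
    (hV : Module.finrank 𝔽 V = 3)
    (E : V →ₗ[ZMod p] V →ₗ[ZMod p] ZMod p)
    (halt : ∀ x : V, E x x = 0)
    (hnd : ∀ x : V, (∀ y : V, E x y = 0) → x = 0)
    (hadj : ∀ (c : 𝔽) (x y : V), E (c • x) y = E x ((c ^ p) • y))
    (v : V) (hv0 : v ≠ 0) (hvE : ∀ c : 𝔽, E v (c • v) = 0)
    (W : Submodule (ZMod p) V)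
    (hW3 : Module.finrank (ZMod p) W = 3)
    (hWiso : ∀ x ∈ W, ∀ y ∈ W, E x y = 0)
    (hD₂W : ((Submodule.span 𝔽 {v} : Submodule 𝔽 V) : Set V) ⊆ (W : Set V)) :
    (W : Set V) ⊆ {x : V | ∀ d ∈ (Submodule.span 𝔽 {v} : Submodule 𝔽 V), E x d = 0} ∧
    ((Submodule.span 𝔽 (W : Set V) : Submodule 𝔽 V) : Set V) =
      {x : V | ∀ d ∈ (Submodule.span 𝔽 {v} : Submodule 𝔽 V), E x d = 0} ∧
    Module.finrank 𝔽 ↥(Submodule.span 𝔽 (W : Set V)) = 2 :=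
  lemma_4_3_12_part1_general p hp 𝔽 hcard V hV E halt hnd hadj v hv0 W hW3 hWiso hD₂W
end

section
/- Let p be a prime, 𝔽 a field with p² elements, and σ : 𝔽 → 𝔽 the Frobenius automorphism x ↦ x^p. Let V be a 3-dimensional 𝔽-vector space, regarded also as a 6-dimensional 𝔽_p-vector space, equipped with an 𝔽_p-bilinear form E : V × V → 𝔽_p that is alternating, nondegenerate, and satisfies E(c·x, y) = E(x, σ(c)·y) for all c ∈ 𝔽 and x, y ∈ V. Fix v ∈ V, v ≠ 0, with E(v, c·v) = 0 for all c ∈ 𝔽, and set D₂ = 𝔽·v. If W ⊆ V is a Lagrangian (a 3-dimensional 𝔽_p-subspace with E vanishing identically on W × W) such that the 𝔽-subspace 𝔽·W generated by W has dim_𝔽(𝔽·W) = 2, then either W ∩ D₂ = 0 or D₂ ⊆ W; i.e., dim_{𝔽_p}(W ∩ D₂) ≠ 1. -/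
/-!
Write `D = 𝔽·v` and let `w ≠ 0` lie in `W ∩ D`. Because `E(c·x, y) = E(x, cᵖ·y)`, the
`E`-orthogonal `P` of `D` is an `𝔽`-subspace, and `D` is isotropic.

If `W ⊆ P`, then `W + D` is isotropic, so by maximality of the Lagrangian `W` we get `D ⊆ W`.
Otherwise `𝔽·W ∩ P` is a proper `𝔽`-subspace of the plane `𝔽·W` containing `w`, hence equals
`D`. Both `W` and `P` lie in the hyperplane `w^⊥`, so `dim_{𝔽_p}(W ∩ P) ≥ 3 + 4 - 5 = 2`;
as `W ∩ P ⊆ 𝔽·W ∩ P = D` and `dim_{𝔽_p} D = 2`, again `D = W ∩ P ⊆ W`.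
-/

open LinearMap Module Submodule

namespace LinearMap.BilinForm

section CommRing

variable {R M : Type*} [CommRing R] [AddCommGroup M] [Module R M] {B : LinearMap.BilinForm R M}

theorem orthogonal_sup (N₁ N₂ : Submodule R M) :
    B.orthogonal (N₁ ⊔ N₂) = B.orthogonal N₁ ⊓ B.orthogonal N₂ := by
  refine le_antisymm (le_inf (orthogonal_le le_sup_left) (orthogonal_le le_sup_right)) ?_
  rintro x ⟨h₁, h₂⟩ y hy
  obtain ⟨y₁, hy₁, y₂, hy₂, rfl⟩ := mem_sup.1 hy
  simp [h₁ y₁ hy₁, h₂ y₂ hy₂]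

theorem sup_le_orthogonal_sup (hR : B.IsRefl) {N₁ N₂ : Submodule R M}
    (h₁ : N₁ ≤ B.orthogonal N₁) (h₂ : N₂ ≤ B.orthogonal N₂) (h₁₂ : N₁ ≤ B.orthogonal N₂) :
    N₁ ⊔ N₂ ≤ B.orthogonal (N₁ ⊔ N₂) := by
  have h₂₁ : N₂ ≤ B.orthogonal N₁ := fun y hy x hx => hR _ _ (h₁₂ hx y hy)
  rw [orthogonal_sup]
  exact sup_le (le_inf h₁ h₁₂) (le_inf h₂₁ h₂)

end CommRing

section Field

variable {K V : Type*} [Field K] [AddCommGroup V] [Module K V] [FiniteDimensional K V]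
  {B : LinearMap.BilinForm K V}

theorem two_mul_finrank_le_of_le_orthogonal (hB : B.Nondegenerate) {N : Submodule K V}
    (hN : N ≤ B.orthogonal N) : 2 * finrank K N ≤ finrank K V := by
  have h := finrank_mono hN
  rw [finrank_orthogonal hB] at h
  have := N.finrank_le
  omega

/-- A Lagrangian is a maximal isotropic subspace. -/
theorem le_of_le_orthogonal_of_two_mul_finrank_eq (hB : B.Nondegenerate) (hR : B.IsRefl)
    {W N : Submodule K V} (hW : W ≤ B.orthogonal W) (hWV : 2 * finrank K W = finrank K V)
    (hN : N ≤ B.orthogonal N) (hWN : W ≤ B.orthogonal N) : N ≤ W := by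
  have hsup := two_mul_finrank_le_of_le_orthogonal hB (sup_le_orthogonal_sup hR hW hN hWN)
  have hW_eq : W = W ⊔ N := eq_of_le_of_finrank_le le_sup_left (by omega)
  exact hW_eq ▸ le_sup_right

theorem finrank_add_one_le_finrank_inf_orthogonal_add (hB : B.Nondegenerate)
    {W N : Submodule K V} (hW : W ≤ B.orthogonal W) {w : V} (hw : w ∈ W ⊓ N) (hw0 : w ≠ 0) :
    finrank K W + 1 ≤ finrank K ↥(W ⊓ B.orthogonal N) + finrank K N := by
  have hH : W ⊔ B.orthogonal N ≤ B.orthogonal (K ∙ w) :=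
    sup_le (hW.trans (orthogonal_le (span_singleton_le_iff_mem _ _ |>.2 hw.1)))
      (orthogonal_le (span_singleton_le_iff_mem _ _ |>.2 hw.2))
  have hsup := finrank_mono hH
  rw [finrank_orthogonal hB, finrank_span_singleton hw0] at hsup
  have := finrank_sup_add_finrank_inf_eq W (B.orthogonal N)
  rw [finrank_orthogonal hB] at this
  have := N.finrank_le
  have : 0 < finrank K V := finrank_pos_iff_exists_ne_zero.2 ⟨w, hw0⟩
  omega

end Field

section Semilinear

variable {K L V : Type*} [CommRing K] [Semiring L] [Algebra K L] [AddCommGroup V] [Module K V]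
  [Module L V] [IsScalarTower K L V] {B : LinearMap.BilinForm K V} {σ : L → L}

def semilinearOrthogonal (hR : B.IsRefl) (hσ : ∀ (c : L) (x y : V), B (c • x) y = B x (σ c • y))
    (N : Submodule L V) : Submodule L V where
  toAddSubmonoid := (B.orthogonal (N.restrictScalars K)).toAddSubmonoid
  smul_mem' c x hx n hn := hR _ _ <| by
    rw [hσ]
    exact hR _ _ (hx _ (N.smul_mem (σ c) hn))

theorem restrictScalars_span_singleton_le_orthogonal
    (hσ : ∀ (c : L) (x y : V), B (c • x) y = B x (σ c • y)) {v : V} (hv : ∀ c : L, B v (c • v) = 0) :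
    (L ∙ v).restrictScalars K ≤ B.orthogonal ((L ∙ v).restrictScalars K) := by
  intro x hx y hy
  obtain ⟨a, rfl⟩ := mem_span_singleton.1 hx
  obtain ⟨b, rfl⟩ := mem_span_singleton.1 hy
  rw [hσ, smul_smul]
  exact hv _

end Semilinear

section SemilinearField

variable {K L V : Type*} [Field K] [Field L] [Algebra K L] [AddCommGroup V] [Module K V]
  [Module L V] [IsScalarTower K L V] {B : LinearMap.BilinForm K V} {σ : L → L}

theorem restrictScalars_le_of_not_le_orthogonal [FiniteDimensional K V]
    (hKL : finrank K L = 2) (hB : B.Nondegenerate) (hR : B.IsRefl)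
    (hσ : ∀ (c : L) (x y : V), B (c • x) y = B x (σ c • y))
    {W : Submodule K V} (hW : W ≤ B.orthogonal W) (hW3 : 3 ≤ finrank K W)
    (hU : finrank L (span L (W : Set V)) ≤ 2)
    {D : Submodule L V} (hD : D.restrictScalars K ≤ B.orthogonal (D.restrictScalars K))
    (hD1 : finrank L D = 1) (hWD : W ⊓ D.restrictScalars K ≠ ⊥)
    (hWP : ¬W ≤ B.orthogonal (D.restrictScalars K)) :
    D.restrictScalars K ≤ W := by
  have : FiniteDimensional L V := .of_restrictScalars_finite K L V
  obtain ⟨w, hw, hw0⟩ := (Submodule.ne_bot_iff _).1 hWD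
  set U := span L (W : Set V)
  set P := B.semilinearOrthogonal hR hσ D
  have hUP : U ⊓ P ≤ D := by
    have hwUP : L ∙ w ≤ U ⊓ P := (span_singleton_le_iff_mem _ _).2 ⟨subset_span hw.1, hD hw.2⟩
    have hlt : U ⊓ P < U :=
      inf_le_left.lt_of_ne fun h => hWP fun x hx => (h.ge (subset_span hx)).2
    have := finrank_lt_finrank_of_lt hlt
    rw [← eq_of_le_of_finrank_le hwUP (by rw [finrank_span_singleton hw0]; omega)]
    exact (span_singleton_le_iff_mem _ _).2 hw.2
  have hDK : finrank K (D.restrictScalars K) = 2 := by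
    have : finrank K D = finrank K L * finrank L D := (finrank_mul_finrank K L D).symm
    rwa [hKL, hD1] at this
  have hdim := finrank_add_one_le_finrank_inf_orthogonal_add hB hW hw hw0
  have hle : W ⊓ B.orthogonal (D.restrictScalars K) ≤ D.restrictScalars K :=
    fun x hx => hUP ⟨subset_span hx.1, hx.2⟩
  rw [← eq_of_le_of_finrank_le hle (by omega)]
  exact inf_le_left

end SemilinearField

end LinearMap.BilinForm

/-- **Part of Lemma 4.3.12.**  Let `𝔽` be a field with `p²` elements, `V` a
3-dimensional `𝔽`-vector space (hence a 6-dimensional `𝔽_p`-space), and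
`E : V × V → 𝔽_p` an alternating nondegenerate `𝔽_p`-bilinear form with
`E(c·x, y) = E(x, σ(c)·y)` where `σ(c) = c^p` is the Frobenius.  Let `v ≠ 0`
with `E(v, c·v) = 0` for all `c ∈ 𝔽`, and `D₂ = 𝔽·v`.  If `W` is a Lagrangian
(3-dimensional `𝔽_p`-subspace on which `E` vanishes) whose `𝔽`-span is
2-dimensional, then either `W ∩ D₂ = 0` or `D₂ ⊆ W`. -/
theorem lemma_4_3_12_part2 (p : ℕ) (hp : p.Prime)
    (𝔽 : Type*) [Field 𝔽] [Fintype 𝔽] (hcard : Fintype.card 𝔽 = p ^ 2)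
    (V : Type*) [AddCommGroup V] [Module 𝔽 V]
    [Module (ZMod p) V] [Algebra (ZMod p) 𝔽] [IsScalarTower (ZMod p) 𝔽 V]
    (hV : Module.finrank 𝔽 V = 3)
    (E : V →ₗ[ZMod p] V →ₗ[ZMod p] ZMod p)
    (halt : ∀ x : V, E x x = 0)
    (hnd : ∀ x : V, (∀ y : V, E x y = 0) → x = 0)
    (hadj : ∀ (c : 𝔽) (x y : V), E (c • x) y = E x ((c ^ p) • y))
    (v : V) (hv0 : v ≠ 0) (hvE : ∀ c : 𝔽, E v (c • v) = 0)
    (W : Submodule (ZMod p) V)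
    (hW3 : Module.finrank (ZMod p) W = 3)
    (hWiso : ∀ x ∈ W, ∀ y ∈ W, E x y = 0)
    (hspan : Module.finrank 𝔽 ↥(Submodule.span 𝔽 (W : Set V)) = 2) :
    W ⊓ (Submodule.span 𝔽 {v}).restrictScalars (ZMod p) = ⊥ ∨
      (Submodule.span 𝔽 {v}).restrictScalars (ZMod p) ≤ W := by
  have : Fact p.Prime := ⟨hp⟩
  have : FiniteDimensional 𝔽 V := .of_finrank_pos (by omega)
  have : FiniteDimensional (ZMod p) V := .trans (ZMod p) 𝔽 V
  have h𝔽 : finrank (ZMod p) 𝔽 = 2 := by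
    have h := card_eq_pow_finrank (K := ZMod p) (V := 𝔽)
    rw [ZMod.card, hcard] at h
    exact Nat.pow_right_injective hp.two_le h.symm
  have hV6 : 2 * finrank (ZMod p) W = finrank (ZMod p) V := by
    rw [hW3, ← finrank_mul_finrank (ZMod p) 𝔽 V, h𝔽, hV]
  have hR : E.IsRefl := IsAlt.isRefl halt
  have hE : E.Nondegenerate := hR.nondegenerate_iff_separatingLeft.2 hnd
  have hW : W ≤ BilinForm.orthogonal E W := fun x hx y hy => hWiso y hy x hx
  have hD := BilinForm.restrictScalars_span_singleton_le_orthogonal (K := ZMod p) hadj hvE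
  refine or_iff_not_imp_left.2 fun hWD => ?_
  by_cases hWP : W ≤ BilinForm.orthogonal E ((𝔽 ∙ v).restrictScalars (ZMod p))
  · exact BilinForm.le_of_le_orthogonal_of_two_mul_finrank_eq hE hR hW hV6 hD hWP
  · exact BilinForm.restrictScalars_le_of_not_le_orthogonal h𝔽 hE hR hadj hW hW3.ge hspan.le hD
      (finrank_span_singleton hv0) hWD hWP
end

section
/- Let p be a prime, 𝔽 a field with p² elements, and σ : 𝔽 → 𝔽 the Frobenius automorphism x ↦ x^p. Let V be a 3-dimensional 𝔽-vector space, regarded also as a 6-dimensional 𝔽_p-vector space, equipped with an 𝔽_p-bilinear form E : V × V → 𝔽_p that is alternating, nondegenerate, and satisfies E(c·x, y) = E(x, σ(c)·y) for all c ∈ 𝔽 and x, y ∈ V. Let U ⊆ V be an 𝔽-subspace with dim_𝔽 U = 2 such that U^⊥ ⊆ U, where U^⊥ = {x ∈ V : E(x,u) = 0 for all u ∈ U}. Then U^⊥ is a 1-dimensional 𝔽-subspace on which E vanishes identically, and it is the unique 1-dimensional 𝔽-subspace L ⊆ U with E(x,y) = 0 for all x, y ∈ L. -/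
/-!
Because `E (c • x) y = E x (σ c • y)`, the orthogonal of an `𝔽`-subspace is again an
`𝔽`-subspace, and dividing the `K`-dimension formula `dim U + dim U^⊥ = dim V` by `[𝔽 : K]` gives
the same formula over `𝔽`; in particular `dim U^⊥ = 3 - 2 = 1`, and every totally isotropic
`𝔽`-subspace `W ≤ W^⊥` of `V` has `2 dim W ≤ 3`, so is at most a line. If `L' ≤ U` is an
isotropic line, then `L'` and `U^⊥ ≤ U` are isotropic and orthogonal to each other, so
`L' ⊔ U^⊥` is totally isotropic, hence a line, and `L' = U^⊥`.
-/

open Module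

namespace LinearMap.BilinForm

variable {K 𝔽 V : Type*} [Field K] [Field 𝔽] [AddCommGroup V] [Module K V] [Module 𝔽 V]
  {E : LinearMap.BilinForm K V} {σ : 𝔽 → 𝔽}

def orthogonalSubmodule (hE : ∀ (c : 𝔽) (x y : V), E (c • x) y = E x (σ c • y))
    (U : Submodule 𝔽 V) : Submodule 𝔽 V where
  carrier := {x | ∀ u ∈ U, E x u = 0}
  add_mem' hx hy u hu := by rw [map_add, LinearMap.add_apply, hx u hu, hy u hu, add_zero]
  zero_mem' u _ := by rw [map_zero, LinearMap.zero_apply]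
  smul_mem' c x hx u hu := by rw [hE]; exact hx _ (U.smul_mem _ hu)

variable (hE : ∀ (c : 𝔽) (x y : V), E (c • x) y = E x (σ c • y))

theorem orthogonalSubmodule_antitone {U W : Submodule 𝔽 V} (h : W ≤ U) :
    orthogonalSubmodule hE U ≤ orthogonalSubmodule hE W :=
  fun _ hx u hu => hx u (h hu)

theorem orthogonalSubmodule_sup (U W : Submodule 𝔽 V) :
    orthogonalSubmodule hE (U ⊔ W) = orthogonalSubmodule hE U ⊓ orthogonalSubmodule hE W := by
  refine le_antisymm (le_inf (orthogonalSubmodule_antitone hE le_sup_left)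
    (orthogonalSubmodule_antitone hE le_sup_right)) fun x ⟨hU, hW⟩ v hv => ?_
  obtain ⟨u, hu, w, hw, rfl⟩ := Submodule.mem_sup.mp hv
  rw [map_add, hU u hu, hW w hw, add_zero]

theorem le_orthogonalSubmodule_comm (hrefl : E.IsRefl) {U W : Submodule 𝔽 V} :
    W ≤ orthogonalSubmodule hE U ↔ U ≤ orthogonalSubmodule hE W :=
  ⟨fun h _ hu _ hw => hrefl _ _ (h hw _ hu), fun h _ hw _ hu => hrefl _ _ (h hu _ hw)⟩

theorem sup_orthogonalSubmodule_le_orthogonalSubmodule (hrefl : E.IsRefl)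
    {U W : Submodule 𝔽 V} (hU : orthogonalSubmodule hE U ≤ U) (hWU : W ≤ U)
    (hW : W ≤ orthogonalSubmodule hE W) :
    W ⊔ orthogonalSubmodule hE U ≤ orthogonalSubmodule hE (W ⊔ orthogonalSubmodule hE U) := by
  have hUW := orthogonalSubmodule_antitone hE hWU
  rw [orthogonalSubmodule_sup]
  exact sup_le (le_inf hW ((le_orthogonalSubmodule_comm hE hrefl).mp hUW))
    (le_inf hUW (orthogonalSubmodule_antitone hE hU))

variable [Algebra K 𝔽] [IsScalarTower K 𝔽 V] [FiniteDimensional K 𝔽] [FiniteDimensional 𝔽 V]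

theorem finrank_orthogonalSubmodule_add (hnd : E.Nondegenerate) (U : Submodule 𝔽 V) :
    finrank 𝔽 (orthogonalSubmodule hE U) + finrank 𝔽 U = finrank 𝔽 V := by
  have : FiniteDimensional K V := .trans K 𝔽 V
  -- Over `K`, `orthogonalSubmodule hE U` is `E.flip.orthogonal U` by definition.
  have hK : finrank K (orthogonalSubmodule hE U) = finrank K V - finrank K U :=
    finrank_orthogonal hnd.flip (U.restrictScalars K)
  have hUV : finrank K U ≤ finrank K V := Submodule.finrank_le (U.restrictScalars K)
  have hpos : 0 < finrank K 𝔽 := finrank_pos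
  rw [← finrank_mul_finrank K 𝔽 V, ← finrank_mul_finrank K 𝔽 U] at hK hUV
  rw [← finrank_mul_finrank K 𝔽 (orthogonalSubmodule hE U)] at hK
  apply Nat.eq_of_mul_eq_mul_left hpos
  rw [mul_add, hK, Nat.sub_add_cancel hUV]

theorem two_mul_finrank_le_of_le_orthogonalSubmodule (hnd : E.Nondegenerate)
    {W : Submodule 𝔽 V} (hW : W ≤ orthogonalSubmodule hE W) : 2 * finrank 𝔽 W ≤ finrank 𝔽 V := by
  have := finrank_orthogonalSubmodule_add hE hnd W
  have := Submodule.finrank_mono hW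
  omega

end LinearMap.BilinForm

open LinearMap.BilinForm

theorem lemma_4_3_12_aux_general (p : ℕ) (hp : p.Prime)
    (𝔽 : Type*) [Field 𝔽] [Fintype 𝔽]
    (V : Type*) [AddCommGroup V] [Module 𝔽 V]
    [Module (ZMod p) V] [Algebra (ZMod p) 𝔽] [IsScalarTower (ZMod p) 𝔽 V]
    (hV : Module.finrank 𝔽 V = 3)
    (E : V →ₗ[ZMod p] V →ₗ[ZMod p] ZMod p)
    (halt : ∀ x : V, E x x = 0)
    (hnd : ∀ x : V, (∀ y : V, E x y = 0) → x = 0)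
    (hadj : ∀ (c : 𝔽) (x y : V), E (c • x) y = E x ((c ^ p) • y))
    (U : Submodule 𝔽 V) (hU2 : Module.finrank 𝔽 U = 2)
    (hUperp : {x : V | ∀ u ∈ U, E x u = 0} ⊆ (U : Set V)) :
    ∃ L : Submodule 𝔽 V,
      (L : Set V) = {x : V | ∀ u ∈ U, E x u = 0} ∧
      Module.finrank 𝔽 L = 1 ∧
      (∀ x ∈ L, ∀ y ∈ L, E x y = 0) ∧
      ∀ L' : Submodule 𝔽 V, L' ≤ U → Module.finrank 𝔽 L' = 1 →
        (∀ x ∈ L', ∀ y ∈ L', E x y = 0) → L' = L := by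
  have : Fact p.Prime := ⟨hp⟩
  have : FiniteDimensional 𝔽 V := .of_finrank_pos (by omega)
  have hrefl : E.IsRefl := LinearMap.IsAlt.isRefl halt
  have hnondeg : E.Nondegenerate := hrefl.nondegenerate_iff_separatingLeft.mpr hnd
  have hLU : orthogonalSubmodule hadj U ≤ U := hUperp
  have hL : finrank 𝔽 (orthogonalSubmodule hadj U) = 1 := by
    have := finrank_orthogonalSubmodule_add hadj hnondeg U
    omega
  refine ⟨orthogonalSubmodule hadj U, rfl, hL, fun x hx y hy => hx y (hLU hy),
    fun L' hL'U hL' hL'iso => ?_⟩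
  have hsup := two_mul_finrank_le_of_le_orthogonalSubmodule hadj hnondeg
    (sup_orthogonalSubmodule_le_orthogonalSubmodule hadj hrefl hLU hL'U hL'iso)
  calc L' = L' ⊔ orthogonalSubmodule hadj U :=
        Submodule.eq_of_le_of_finrank_le le_sup_left (by omega)
    _ = orthogonalSubmodule hadj U := (Submodule.eq_of_le_of_finrank_le le_sup_right (by omega)).symm

/-- **Auxiliary claim in the proof of Lemma 4.3.12.**  Let `𝔽` be a field with
`p²` elements, `V` a 3-dimensional `𝔽`-vector space (hence a 6-dimensional
`𝔽_p`-space), and `E : V × V → 𝔽_p` an alternating nondegenerate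
`𝔽_p`-bilinear form with `E(c·x, y) = E(x, c^p·y)`.  If `U ⊆ V` is a
2-dimensional `𝔽`-subspace with `U^⊥ ⊆ U`, then `U^⊥` is a 1-dimensional
isotropic `𝔽`-subspace, and it is the unique 1-dimensional `𝔽`-subspace of `U`
on which `E` vanishes identically. -/
theorem lemma_4_3_12_aux (p : ℕ) (hp : p.Prime)
    (𝔽 : Type*) [Field 𝔽] [Fintype 𝔽] (hcard : Fintype.card 𝔽 = p ^ 2)
    (V : Type*) [AddCommGroup V] [Module 𝔽 V]
    [Module (ZMod p) V] [Algebra (ZMod p) 𝔽] [IsScalarTower (ZMod p) 𝔽 V]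
    (hV : Module.finrank 𝔽 V = 3)
    (E : V →ₗ[ZMod p] V →ₗ[ZMod p] ZMod p)
    (halt : ∀ x : V, E x x = 0)
    (hnd : ∀ x : V, (∀ y : V, E x y = 0) → x = 0)
    (hadj : ∀ (c : 𝔽) (x y : V), E (c • x) y = E x ((c ^ p) • y))
    (U : Submodule 𝔽 V) (hU2 : Module.finrank 𝔽 U = 2)
    (hUperp : {x : V | ∀ u ∈ U, E x u = 0} ⊆ (U : Set V)) :
    ∃ L : Submodule 𝔽 V,
      (L : Set V) = {x : V | ∀ u ∈ U, E x u = 0} ∧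
      Module.finrank 𝔽 L = 1 ∧
      (∀ x ∈ L, ∀ y ∈ L, E x y = 0) ∧
      ∀ L' : Submodule 𝔽 V, L' ≤ U → Module.finrank 𝔽 L' = 1 →
        (∀ x ∈ L', ∀ y ∈ L', E x y = 0) → L' = L :=
  lemma_4_3_12_aux_general p hp 𝔽 V hV E halt hnd hadj U hU2 hUperp
end
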